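/- arXiv:2404.16900 — 2 statements merged into one kernel-verified Lean document; each statement's English description precedes it below -/
import Mathlib

section
/- Let X ⊆ ℝⁿ be convex, K ∈ ℝ^{m×n}, y ∈ ℝ^m, λ > 0, and R : ℝⁿ → ℝ be convex, and let J(x) = (1/2)‖Kx − y‖₂² + λR(x). If x₁ and x₂ both minimize J over X, then R(x₁) = R(x₂). -/
/-!
The fidelity term `x ↦ ½‖Ax − b‖²` is strictly convex in `Ax`: by the parallelogram law its value
at the midpoint of `x₁, x₂` lies `‖Ax₁ − Ax₂‖² / 8` below the average of its values at `x₁, x₂`.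
Adding a convex regularizer keeps this gap, so two minimizers over a convex set, whose midpoint
cannot do better than they do, have `Ax₁ = Ax₂`. Their fidelity terms then agree, and since their
objective values agree, so do their regularizer values.
-/

theorem norm_midpoint_sub_sq {F : Type*} [NormedAddCommGroup F] [InnerProductSpace ℝ F]
    (u v b : F) :
    ‖(1 / 2 : ℝ) • u + (1 / 2 : ℝ) • v - b‖ ^ 2 =
      (‖u - b‖ ^ 2 + ‖v - b‖ ^ 2) / 2 - ‖u - v‖ ^ 2 / 4 := by
  have hpar := parallelogram_law_with_norm ℝ (u - b) (v - b)
  rw [sub_sub_sub_cancel_right] at hpar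
  have hmid : (1 / 2 : ℝ) • u + (1 / 2 : ℝ) • v - b = (1 / 2 : ℝ) • ((u - b) + (v - b)) := by
    module
  rw [hmid, norm_smul, mul_pow, Real.norm_of_nonneg (by norm_num)]
  linarith

section RegularizedLeastSquares

variable {E F : Type*} [AddCommGroup E] [Module ℝ E] [NormedAddCommGroup F]
  [InnerProductSpace ℝ F]

noncomputable def regularizedLeastSquares (A : E →ₗ[ℝ] F) (b : F) (g : E → ℝ) (x : E) : ℝ :=
  1 / 2 * ‖A x - b‖ ^ 2 + g x

theorem regularizedLeastSquares_midpoint_add_le {g : E → ℝ} {X : Set E} (hg : ConvexOn ℝ X g)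
    (A : E →ₗ[ℝ] F) (b : F) {x₁ x₂ : E} (h₁ : x₁ ∈ X) (h₂ : x₂ ∈ X) :
    regularizedLeastSquares A b g ((1 / 2 : ℝ) • x₁ + (1 / 2 : ℝ) • x₂) + ‖A x₁ - A x₂‖ ^ 2 / 8 ≤
      (regularizedLeastSquares A b g x₁ + regularizedLeastSquares A b g x₂) / 2 := by
  have hg_mid := hg.2 h₁ h₂ (by norm_num : (0 : ℝ) ≤ 1 / 2) (by norm_num : (0 : ℝ) ≤ 1 / 2)
    (by norm_num)
  simp only [smul_eq_mul] at hg_mid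
  simp only [regularizedLeastSquares, map_add, map_smul, norm_midpoint_sub_sq]
  linarith

theorem map_eq_of_isMinOn_regularizedLeastSquares {g : E → ℝ} {X : Set E} (hX : Convex ℝ X)
    (hg : ConvexOn ℝ X g) (A : E →ₗ[ℝ] F) (b : F) {x₁ x₂ : E} (h₁ : x₁ ∈ X) (h₂ : x₂ ∈ X)
    (hmin₁ : IsMinOn (regularizedLeastSquares A b g) X x₁)
    (hmin₂ : IsMinOn (regularizedLeastSquares A b g) X x₂) :
    A x₁ = A x₂ := by
  have hmid := hX h₁ h₂ (by norm_num : (0 : ℝ) ≤ 1 / 2) (by norm_num : (0 : ℝ) ≤ 1 / 2)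
    (by norm_num)
  have h₁₂ := isMinOn_iff.1 hmin₁ x₂ h₂
  have h₂₁ := isMinOn_iff.1 hmin₂ x₁ h₁
  have h₁mid := isMinOn_iff.1 hmin₁ _ hmid
  have hsq : ‖A x₁ - A x₂‖ ^ 2 ≤ 0 := by
    linarith [regularizedLeastSquares_midpoint_add_le hg A b h₁ h₂]
  rw [← sub_eq_zero, ← norm_eq_zero]
  exact pow_eq_zero_iff two_ne_zero |>.1 (le_antisymm hsq (sq_nonneg _))

end RegularizedLeastSquares

/-- If `x₁` and `x₂` both minimize `J(x) = (1/2)‖Kx − y‖₂² + λ R(x)` over the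
convex set `X`, with `λ > 0` and `R` convex, then `R(x₁) = R(x₂)`. -/
theorem stmt2 (m n : ℕ) (X : Set (Fin n → ℝ)) (hX : Convex ℝ X)
    (K : Matrix (Fin m) (Fin n) ℝ) (y : Fin m → ℝ)
    (lam : ℝ) (hlam : 0 < lam)
    (R : (Fin n → ℝ) → ℝ) (hR : ConvexOn ℝ Set.univ R)
    (J : (Fin n → ℝ) → ℝ)
    (hJ : ∀ x, J x = (1 / 2) * ∑ i, (K.mulVec x i - y i) ^ 2 + lam * R x)
    (x₁ x₂ : Fin n → ℝ)
    (hx₁ : x₁ ∈ X) (hmin₁ : ∀ x ∈ X, J x₁ ≤ J x)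
    (hx₂ : x₂ ∈ X) (hmin₂ : ∀ x ∈ X, J x₂ ≤ J x) :
    R x₁ = R x₂ := by
  let A : (Fin n → ℝ) →ₗ[ℝ] EuclideanSpace ℝ (Fin m) :=
    (WithLp.linearEquiv 2 ℝ (Fin m → ℝ)).symm.toLinearMap ∘ₗ Matrix.toLin' K
  have hJA : J = regularizedLeastSquares A (WithLp.toLp 2 y) (fun x ↦ lam * R x) := by
    ext x
    simp [hJ, A, regularizedLeastSquares, EuclideanSpace.real_norm_sq_eq]
  have hg : ConvexOn ℝ X (fun x ↦ lam * R x) := (hR.subset (Set.subset_univ X) hX).smul hlam.le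
  have hA := map_eq_of_isMinOn_regularizedLeastSquares hX hg A (WithLp.toLp 2 y) hx₁ hx₂
    (hJA ▸ hmin₁) (hJA ▸ hmin₂)
  have hJ₁₂ : J x₁ = J x₂ := le_antisymm (hmin₁ x₂ hx₂) (hmin₂ x₁ hx₁)
  simp only [hJA, regularizedLeastSquares, hA, add_right_inj] at hJ₁₂
  exact mul_left_cancel₀ hlam.ne' hJ₁₂
end

section
/- Let K ∈ ℝ^{m×n}, λ ≥ 0, η > 0, 0 < p < 1, and let L ≥ 0 satisfy ‖w_η(u) − w_η(v)‖₁ ≤ L · Σ_{i=1}^n | |Du|_i − |Dv|_i | for all u, v ∈ ℝⁿ, and let c_D ≥ 0 satisfy ‖Dx‖_{2,1} ≤ c_D ‖x‖₁ for all x ∈ ℝⁿ. Let x^{GT} ∈ ℝⁿ, e ∈ ℝ^m, y^δ = K x^{GT} + e, and let Ψ : ℝ^m → ℝⁿ satisfy ‖Ψ(K x^{GT} + e) − x^{GT}‖₁ ≤ η₁ + C‖e‖₁ for constants η₁, C ≥ 0. Define J_{GT}(x) = (1/2)‖Kx − y^δ‖₂² + λ Σ_i (w_η(x^{GT}))_i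 |Dx|_i and J_Ψ(x) = (1/2)‖Kx − y^δ‖₂² + λ Σ_i (w_η(Ψ(y^δ)))_i |Dx|_i. Then for all x ∈ ℝⁿ: |J_{GT}(x) − J_Ψ(x)| ≤ λ L c_D (η₁ + C‖e‖₁) ‖Dx‖_{2,1}. -/
open Matrix Finset

/-- Gradient magnitude: `|Dx|_i = sqrt((Dh x)_i² + (Dv x)_i²)`. -/
noncomputable def gMag {n : ℕ} (Dh Dv : Matrix (Fin n) (Fin n) ℝ)
    (x : Fin n → ℝ) (i : Fin n) : ℝ :=
  Real.sqrt ((Dh.mulVec x i) ^ 2 + (Dv.mulVec x i) ^ 2)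

/-- Weight vector `(w_η(x̃))_i = (η / sqrt(η² + |Dx̃|_i²))^(1−p)`. -/
noncomputable def wEta {n : ℕ} (Dh Dv : Matrix (Fin n) (Fin n) ℝ)
    (η p : ℝ) (x : Fin n → ℝ) (i : Fin n) : ℝ :=
  (η / Real.sqrt (η ^ 2 + gMag Dh Dv x i ^ 2)) ^ (1 - p)

lemma sqrt_sq_add_sq_lip (a b c d : ℝ) :
    |Real.sqrt (a ^ 2 + b ^ 2) - Real.sqrt (c ^ 2 + d ^ 2)| ≤
      Real.sqrt ((a - c) ^ 2 + (b - d) ^ 2) := by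
  have key : ∀ x y : ℝ, Real.sqrt (x ^ 2 + y ^ 2) = ‖(⟨x, y⟩ : ℂ)‖ := by
    intro x y
    simp [Complex.norm_def, Complex.normSq_mk, sq]
  rw [key, key, key]
  have hsub : ((⟨a, b⟩ : ℂ) - ⟨c, d⟩) = (⟨a - c, b - d⟩ : ℂ) := by
    apply Complex.ext <;> simp
  have := abs_norm_sub_norm_le (⟨a, b⟩ : ℂ) ⟨c, d⟩
  rwa [hsub] at this

lemma gMag_sub_le {n : ℕ} (Dh Dv : Matrix (Fin n) (Fin n) ℝ)
    (u v : Fin n → ℝ) (i : Fin n) :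
    |gMag Dh Dv u i - gMag Dh Dv v i| ≤ gMag Dh Dv (u - v) i := by
  simpa [gMag, Matrix.mulVec_sub] using
    sqrt_sq_add_sq_lip (Dh.mulVec u i) (Dv.mulVec u i) (Dh.mulVec v i) (Dv.mulVec v i)

lemma gMag_nonneg {n : ℕ} (Dh Dv : Matrix (Fin n) (Fin n) ℝ)
    (x : Fin n → ℝ) (i : Fin n) : 0 ≤ gMag Dh Dv x i :=
  Real.sqrt_nonneg _

/-- bound on the distance between the ground-truth-weighted objective `J_GT`
and the reconstructor-weighted objective `J_Ψ`:
`|J_GT(x) − J_Ψ(x)| ≤ λ L c_D (η₁ + C‖e‖₁) ‖Dx‖_{2,1}`. -/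
theorem stmt13 (m n : ℕ) (K : Matrix (Fin m) (Fin n) ℝ)
    (Dh Dv : Matrix (Fin n) (Fin n) ℝ)
    (lam η p L cD η₁ Cst : ℝ)
    (hlam : 0 ≤ lam) (hη : 0 < η) (hp0 : 0 < p) (hp1 : p < 1)
    (hL : 0 ≤ L) (hcD : 0 ≤ cD) (hη₁ : 0 ≤ η₁) (hCst : 0 ≤ Cst)
    (hLip : ∀ u v : Fin n → ℝ,
      ∑ i, |wEta Dh Dv η p u i - wEta Dh Dv η p v i| ≤
        L * ∑ i, |gMag Dh Dv u i - gMag Dh Dv v i|)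
    (hcDbound : ∀ x : Fin n → ℝ, ∑ i, gMag Dh Dv x i ≤ cD * ∑ i, |x i|)
    (xGT : Fin n → ℝ) (e : Fin m → ℝ) (yδ : Fin m → ℝ)
    (hy : yδ = K.mulVec xGT + e)
    (Ψ : (Fin m → ℝ) → (Fin n → ℝ))
    (hΨ : ∑ i, |Ψ (K.mulVec xGT + e) i - xGT i| ≤ η₁ + Cst * ∑ j, |e j|)
    (JGT JΨ : (Fin n → ℝ) → ℝ)
    (hJGT : ∀ x, JGT x = (1 / 2) * ∑ i, (K.mulVec x i - yδ i) ^ 2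
        + lam * ∑ i, wEta Dh Dv η p xGT i * gMag Dh Dv x i)
    (hJΨ : ∀ x, JΨ x = (1 / 2) * ∑ i, (K.mulVec x i - yδ i) ^ 2
        + lam * ∑ i, wEta Dh Dv η p (Ψ yδ) i * gMag Dh Dv x i) :
    ∀ x : Fin n → ℝ,
      |JGT x - JΨ x| ≤
        lam * L * cD * (η₁ + Cst * ∑ j, |e j|) * ∑ i, gMag Dh Dv x i := by
  intro x
  set g : Fin n → ℝ := gMag Dh Dv x with hg
  set S : ℝ := ∑ i, g i with hS
  have hSnn : 0 ≤ S := Finset.sum_nonneg fun i _ => gMag_nonneg _ _ _ _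
  set A : Fin n → ℝ := fun i => wEta Dh Dv η p xGT i - wEta Dh Dv η p (Ψ yδ) i with hA
  have hdiff : JGT x - JΨ x = lam * ∑ i, A i * g i := by
    have h2 : ∑ i, A i * g i = ∑ i, wEta Dh Dv η p xGT i * gMag Dh Dv x i
        - ∑ i, wEta Dh Dv η p (Ψ yδ) i * gMag Dh Dv x i := by
      rw [← Finset.sum_sub_distrib]
      exact Finset.sum_congr rfl fun i _ => by simp [hA, hg]; ring
    rw [hJGT, hJΨ, h2]; ring
  -- bound ∑ |A i|
  have hT : ∑ i, |xGT i - Ψ yδ i| ≤ η₁ + Cst * ∑ j, |e j| := by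
    calc ∑ i, |xGT i - Ψ yδ i| = ∑ i, |Ψ (K.mulVec xGT + e) i - xGT i| := by
          apply Finset.sum_congr rfl; intro i _; rw [hy, abs_sub_comm]
      _ ≤ η₁ + Cst * ∑ j, |e j| := hΨ
  have hAbound : ∑ i, |A i| ≤ L * (cD * (η₁ + Cst * ∑ j, |e j|)) := by
    calc ∑ i, |A i| ≤ L * ∑ i, |gMag Dh Dv xGT i - gMag Dh Dv (Ψ yδ) i| :=
          hLip xGT (Ψ yδ)
      _ ≤ L * ∑ i, gMag Dh Dv (xGT - Ψ yδ) i := by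
          apply mul_le_mul_of_nonneg_left _ hL
          exact Finset.sum_le_sum fun i _ => gMag_sub_le Dh Dv xGT (Ψ yδ) i
      _ ≤ L * (cD * ∑ i, |xGT i - Ψ yδ i|) := by
          apply mul_le_mul_of_nonneg_left _ hL
          simpa using hcDbound (xGT - Ψ yδ)
      _ ≤ L * (cD * (η₁ + Cst * ∑ j, |e j|)) := by
          apply mul_le_mul_of_nonneg_left _ hL
          exact mul_le_mul_of_nonneg_left hT hcD
  have hmain : |∑ i, A i * g i| ≤ (∑ i, |A i|) * S := by
    calc |∑ i, A i * g i| ≤ ∑ i, |A i * g i| := Finset.abs_sum_le_sum_abs _ _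
      _ = ∑ i, |A i| * g i := by
          apply Finset.sum_congr rfl; intro i _
          rw [abs_mul, abs_of_nonneg (gMag_nonneg _ _ _ _)]
      _ ≤ ∑ i, |A i| * S := by
          apply Finset.sum_le_sum; intro i _
          apply mul_le_mul_of_nonneg_left _ (abs_nonneg _)
          exact Finset.single_le_sum (f := g) (fun j _ => gMag_nonneg _ _ _ _) (Finset.mem_univ i)
      _ = (∑ i, |A i|) * S := by rw [Finset.sum_mul]
  calc |JGT x - JΨ x| = lam * |∑ i, A i * g i| := by
        rw [hdiff, abs_mul, abs_of_nonneg hlam]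
    _ ≤ lam * ((∑ i, |A i|) * S) := mul_le_mul_of_nonneg_left hmain hlam
    _ ≤ lam * ((L * (cD * (η₁ + Cst * ∑ j, |e j|))) * S) := by
        apply mul_le_mul_of_nonneg_left _ hlam
        exact mul_le_mul_of_nonneg_right hAbound hSnn
    _ = lam * L * cD * (η₁ + Cst * ∑ j, |e j|) * ∑ i, g i := by rw [← hS]; ring
end
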